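/- The retraction $\phi_{n,0}=T_{n,1}\circ\cdots\circ T_{n,c(n)}:D_n\to M_n$ equals the restriction $\phi_n|_{D_n}$ of $\phi_n=(r_n|_{M_n})^{-1}\circ T_{s_n}\circ r_n$ to $D_n$. -/

import Mathlib

open Set

noncomputable section

variable {Γ : Type*} [TopologicalSpace Γ] [DiscreteTopology Γ]

/-- `ℓ∞(Γ)`: the Banach space of bounded real functions on `Γ`
(carrying the discrete topology, so that boundedness is the only constraint). -/
abbrev Linf (Γ : Type*) [TopologicalSpace Γ] [DiscreteTopology Γ] : Type _ :=
  BoundedContinuousFunction Γ ℝ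

/-- The entire part of a real number, toward `0`: `[r] = sign(r)⌊|r|⌋`. -/
def ent (r : ℝ) : ℝ := Real.sign r * ⌊|r|⌋

lemma abs_ent_le (r : ℝ) : |ent r| ≤ |r| := by
  have hsign : |Real.sign r| ≤ 1 := by
    rcases lt_trichotomy r 0 with h | h | h
    · rw [Real.sign_of_neg h]; norm_num
    · rw [h, Real.sign_zero]; norm_num
    · rw [Real.sign_of_pos h]; norm_num
  have hfl : |(⌊|r|⌋ : ℝ)| ≤ |r| := by
    rw [abs_of_nonneg (by exact_mod_cast Int.floor_nonneg.mpr (abs_nonneg r))]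
    exact Int.floor_le _
  calc |ent r| = |Real.sign r| * |(⌊|r|⌋ : ℝ)| := abs_mul _ _
    _ ≤ 1 * |r| := mul_le_mul hsign hfl (abs_nonneg _) zero_le_one
    _ = |r| := one_mul _

/-- The coordinatewise quantization `f : ℓ∞(S) → ℓ∞(S)`, `f(x)(γ) = [x(γ)]`. -/
def quant (x : Linf Γ) : Linf Γ :=
  BoundedContinuousFunction.ofNormedAddCommGroup (fun γ => ent (x γ))
    continuous_of_discreteTopology ‖x‖ (fun γ => by
      rw [Real.norm_eq_abs]
      exact (abs_ent_le (x γ)).trans (by simpa using x.norm_coe_le_norm γ))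

/-- Scalar truncation at level `s`. -/
def truncFun (s t : ℝ) : ℝ := if |t| ≤ s then t else s * t / |t|

lemma abs_truncFun_le (s t : ℝ) : |truncFun s t| ≤ max |s| |t| := by
  unfold truncFun
  split_ifs with h
  · exact le_max_right _ _
  · by_cases ht : t = 0
    · simp [ht]
    · have hst : abs (s * t / |t|) = |s| := by
        rw [abs_div, abs_mul, abs_abs, mul_div_assoc, div_self (abs_ne_zero.mpr ht), mul_one]
      rw [hst]; exact le_max_left _ _

/-- The truncation of radius `s`: `T_s(x)(γ) = x(γ)` if `|x(γ)| ≤ s`,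
and `= s·x(γ)/|x(γ)|` otherwise. -/
def trunc (s : ℝ) (x : Linf Γ) : Linf Γ :=
  BoundedContinuousFunction.ofNormedAddCommGroup (fun γ => truncFun s (x γ))
    continuous_of_discreteTopology (max |s| ‖x‖) (fun γ => by
      rw [Real.norm_eq_abs]
      exact (abs_truncFun_le s (x γ)).trans
        (max_le_max le_rfl (by simpa using x.norm_coe_le_norm γ)))

/-- The restriction operator `r_S : ℓ∞(Γ) → ℓ∞(S)`, where `ℓ∞(S)` is identified
isometrically with the subspace of `ℓ∞(Γ)` of functions vanishing off `S`. -/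
def restr (S : Set Γ) (x : Linf Γ) : Linf Γ :=
  BoundedContinuousFunction.ofNormedAddCommGroup (S.indicator x)
    continuous_of_discreteTopology ‖x‖ (fun γ => by
      rw [Real.norm_eq_abs]
      by_cases h : γ ∈ S
      · rw [Set.indicator_of_mem h]
        simpa using x.norm_coe_le_norm γ
      · rw [Set.indicator_of_notMem h]
        simp)

/-- The ball `s·B_{ℓ∞(S)}`, viewed inside `ℓ∞(Γ)`: functions supported on `S`
of norm at most `s`. -/
def suppBall (S : Set Γ) (s : ℝ) : Set (Linf Γ) :=
  {x | (∀ γ ∉ S, x γ = 0) ∧ ‖x‖ ≤ s}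

/-- `chain T a b = T (a+1) ∘ ⋯ ∘ T b` (the identity if `b ≤ a`). -/
def chain {α : Type*} (T : ℕ → α → α) (a b : ℕ) : α → α :=
  Nat.rec id (fun k ih => ih ∘ T (a + k + 1)) (b - a)

/-- Bourgain–Delbaen data on `Γ`: a strictly increasing sequence of nonempty finite
sets `Γs n` (for `n ≥ 1`) with union `Γ`, together with compatible bounded linear
extension operators `i n : ℓ∞(Γ_n) → ℓ∞(Γ)` (realized as operators on `ℓ∞(Γ)`
factoring through the restriction `restr (Γs n)`), with norms bounded by the
positive integer `lam`. -/
structure BD (Γ : Type*) [TopologicalSpace Γ] [DiscreteTopology Γ] where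
  Γs : ℕ → Set Γ
  lam : ℕ
  i : ℕ → Linf Γ →L[ℝ] Linf Γ
  one_le_lam : 1 ≤ lam
  finite : ∀ n, 1 ≤ n → (Γs n).Finite
  nonempty : ∀ n, 1 ≤ n → (Γs n).Nonempty
  ssubset : ∀ n, 1 ≤ n → Γs n ⊂ Γs (n + 1)
  iUnion_eq : ⋃ n ∈ {k : ℕ | 1 ≤ k}, Γs n = Set.univ
  extension : ∀ n, 1 ≤ n → ∀ x : Linf Γ, ∀ γ ∈ Γs n, i n x γ = x γ
  factor : ∀ n, 1 ≤ n → ∀ x : Linf Γ, i n (restr (Γs n) x) = i n x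
  compatible : ∀ n m, 1 ≤ n → n < m → ∀ x : Linf Γ, i m (restr (Γs m) (i n x)) = i n x
  norm_i_le : ∀ n, 1 ≤ n → ‖i n‖ ≤ (lam : ℝ)

namespace BD

/-- `s n = λ^n`. -/
def s (B : BD Γ) (n : ℕ) : ℝ := (B.lam : ℝ) ^ n

/-- The sets `M_n` (with `M_0 = ∅`):
`M_n = M_{n-1} ∪ (f ∘ i_n)(f(s_n B_{ℓ∞(Γ_n)}) \ r_n(M_{n-1}))`. -/
def M (B : BD Γ) : ℕ → Set (Linf Γ)
  | 0 => ∅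
  | n + 1 =>
      M B n ∪
        (fun z => quant (B.i (n + 1) z)) ''
          (quant '' suppBall (B.Γs (n + 1)) (B.s (n + 1)) \ restr (B.Γs (n + 1)) '' M B n)

/-- `M = ⋃ n, M_n`. -/
def Mtot (B : BD Γ) : Set (Linf Γ) := ⋃ n, B.M n

/-- `C_n = (f ∘ i_{n+1} ∘ f ∘ T_{s_{n+1}} ∘ r_{n+1} ∘ i_n)
(f(s_{n+1}B_{ℓ∞(Γ_n)}) \ f(s_n B_{ℓ∞(Γ_n)}))`. -/
def C (B : BD Γ) (n : ℕ) : Set (Linf Γ) :=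
  (fun z => quant (B.i (n + 1) (quant (trunc (B.s (n + 1)) (restr (B.Γs (n + 1)) (B.i n z)))))) ''
    (quant '' suppBall (B.Γs n) (B.s (n + 1)) \ quant '' suppBall (B.Γs n) (B.s n))

/-- `D_n = M_n ∪ C_n`. -/
def D (B : BD Γ) (n : ℕ) : Set (Linf Γ) := B.M n ∪ B.C n

end BD

/-!
Each `T_{n,i}` moves only `c_i`, and it moves it into `M_n` or onto some `c_k` with
`‖r_n c_k‖ ≤ ‖r_n c_i‖ - 1`, hence `k < i` by the ordering of `C_n`; so `φ_{n,0}` carries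
every point of `D_n` into `M_n` in finitely many such moves. Along a move the quantity
`T_{s_n}(r_n x)` does not change, because `T_{s_n} ∘ T_t = T_{s_n}` for `t ≥ s_n` and
`‖r_n c‖ ≥ s_n + 1` on `C_n`; on `M_n` it equals `r_n x`, as `M_n` lies in the `s_n`-ball
over `Γ_n`.
-/

section Scalar

theorem ent_intCast (k : ℤ) : ent k = k := by
  rw [ent, Real.sign_intCast, ← Int.cast_abs, Int.floor_intCast]
  exact_mod_cast Int.sign_mul_abs k

theorem exists_intCast_eq_ent (r : ℝ) : ∃ k : ℤ, (k : ℝ) = ent r := by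
  rcases Real.sign_apply_eq r with h | h | h <;> simp only [ent, h]
  exacts [⟨-⌊|r|⌋, by push_cast; ring⟩, ⟨0, by simp⟩, ⟨⌊|r|⌋, by ring⟩]

theorem ent_ent (r : ℝ) : ent (ent r) = ent r := by
  obtain ⟨k, hk⟩ := exists_intCast_eq_ent r
  rw [← hk, ent_intCast]

theorem ent_zero : ent 0 = 0 := by simp [ent]

theorem truncFun_of_abs_le {s t : ℝ} (h : |t| ≤ s) : truncFun s t = t := if_pos h

theorem truncFun_of_le_abs {s t : ℝ} (h : s ≤ |t|) : truncFun s t = s * t / |t| := by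
  unfold truncFun
  split_ifs with hts
  · rcases eq_or_ne t 0 with rfl | ht
    · simp
    · rw [← le_antisymm hts h, mul_div_cancel_left₀ t (abs_ne_zero.mpr ht)]
  · rfl

theorem abs_truncFun_le_of_nonneg {s : ℝ} (hs : 0 ≤ s) (t : ℝ) : |truncFun s t| ≤ s := by
  rcases le_total |t| s with h | h
  · rwa [truncFun_of_abs_le h]
  · rw [truncFun_of_le_abs h, abs_div, abs_mul, abs_abs, abs_of_nonneg hs, mul_div_assoc]
    exact mul_le_of_le_one_right hs (div_self_le_one _)

theorem truncFun_truncFun {s t : ℝ} (hs : 0 ≤ s) (hst : s ≤ t) (r : ℝ) :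
    truncFun s (truncFun t r) = truncFun s r := by
  rcases le_total |r| t with h | h
  · rw [truncFun_of_abs_le h]
  have ht : 0 ≤ t := hs.trans hst
  have habs : abs (t * r / |r|) = t := by
    rcases eq_or_ne r 0 with rfl | hr
    · simpa using ((h.trans (by simp)).antisymm ht).symm
    · rw [abs_div, abs_mul, abs_abs, abs_of_nonneg ht,
        mul_div_cancel_right₀ t (abs_ne_zero.mpr hr)]
  rw [truncFun_of_le_abs h, truncFun_of_le_abs (habs.ge.trans' hst),
    truncFun_of_le_abs (hst.trans h), habs]
  rcases ht.eq_or_lt with rfl | ht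
  · simp [le_antisymm hst hs]
  · field_simp

end Scalar

section Linf

variable {Γ : Type*} [TopologicalSpace Γ] [DiscreteTopology Γ]

theorem quant_apply (x : Linf Γ) (γ : Γ) : quant x γ = ent (x γ) := rfl

theorem trunc_apply (s : ℝ) (x : Linf Γ) (γ : Γ) : trunc s x γ = truncFun s (x γ) := rfl

theorem restr_apply (S : Set Γ) (x : Linf Γ) (γ : Γ) : restr S x γ = S.indicator x γ := rfl

theorem abs_apply_le_norm (x : Linf Γ) (γ : Γ) : |x γ| ≤ ‖x‖ :=
  Real.norm_eq_abs (x γ) ▸ x.norm_coe_le_norm γ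

theorem norm_le_of_forall_abs_le {x : Linf Γ} {C : ℝ} (hC : 0 ≤ C) (h : ∀ γ, |x γ| ≤ C) :
    ‖x‖ ≤ C :=
  (BoundedContinuousFunction.norm_le hC).2 fun γ => (Real.norm_eq_abs (x γ)).trans_le (h γ)

theorem norm_quant_le (x : Linf Γ) : ‖quant x‖ ≤ ‖x‖ :=
  norm_le_of_forall_abs_le (norm_nonneg x) fun γ =>
    (abs_ent_le _).trans (abs_apply_le_norm x γ)

theorem quant_quant (x : Linf Γ) : quant (quant x) = quant x :=
  BoundedContinuousFunction.ext fun γ => ent_ent (x γ)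

theorem trunc_eq_self {s : ℝ} {x : Linf Γ} (h : ∀ γ, |x γ| ≤ s) : trunc s x = x :=
  BoundedContinuousFunction.ext fun γ => truncFun_of_abs_le (h γ)

theorem norm_trunc_le {s : ℝ} (hs : 0 ≤ s) (x : Linf Γ) : ‖trunc s x‖ ≤ s :=
  norm_le_of_forall_abs_le hs fun γ => abs_truncFun_le_of_nonneg hs (x γ)

theorem trunc_trunc {s t : ℝ} (hs : 0 ≤ s) (hst : s ≤ t) (x : Linf Γ) :
    trunc s (trunc t x) = trunc s x :=
  BoundedContinuousFunction.ext fun γ => truncFun_truncFun hs hst (x γ)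

/-- Quantized vectors are integer valued, so leaving the ball of integer radius `k` costs at
least `1` in norm. -/
theorem add_one_le_norm_quant {S : Set Γ} {k : ℕ} {y : Linf Γ} (hy : ∀ γ ∉ S, y γ = 0)
    (hk : quant y ∉ quant '' suppBall S k) : (k : ℝ) + 1 ≤ ‖quant y‖ := by
  by_contra! hlt
  refine hk ⟨quant y, ⟨fun γ hγ => by rw [quant_apply, hy γ hγ, ent_zero], ?_⟩, quant_quant y⟩
  refine norm_le_of_forall_abs_le k.cast_nonneg fun γ => ?_
  obtain ⟨m, hm⟩ := exists_intCast_eq_ent (y γ)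
  have h : ((|m| : ℤ) : ℝ) < k + 1 := by
    rw [Int.cast_abs, hm]
    exact (abs_apply_le_norm (quant y) γ).trans_lt hlt
  rw [quant_apply, ← hm, ← Int.cast_abs]
  exact_mod_cast Int.lt_add_one_iff.mp (by exact_mod_cast h)

end Linf

section Chain

variable {α : Type*} {T : ℕ → α → α}

theorem chain_succ {a b : ℕ} (h : a ≤ b) : chain T a (b + 1) = chain T a b ∘ T (b + 1) := by
  unfold chain
  rw [Nat.sub_add_comm h]
  exact congrArg (_ ∘ T ·) (by omega)

theorem chain_apply_eq_of_forall_fixed {a k b : ℕ} {x : α} (hak : a ≤ k) (hkb : k ≤ b)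
    (hfix : ∀ i, k < i → i ≤ b → T i x = x) : chain T a b x = chain T a k x := by
  induction b, hkb using Nat.le_induction with
  | base => rfl
  | succ b hkb ih =>
    rw [chain_succ (hak.trans hkb), Function.comp_apply, hfix (b + 1) (by omega) le_rfl]
    exact ih fun i hki hib => hfix i hki (by omega)

variable {M : Set α} {N : ℕ} {c : ℕ → α}
  (hinj : InjOn c (Icc 1 N)) (hdisj : ∀ i ∈ Icc 1 N, c i ∉ M)
  (hfix : ∀ i ∈ Icc 1 N, ∀ z ∈ M ∪ c '' Icc 1 i, z ≠ c i → T i z = z)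
  (hstep : ∀ i ∈ Icc 1 N, T i (c i) ∈ M ∪ c '' Ico 1 i)

include hdisj hfix in
theorem chain_apply_of_mem {b : ℕ} (hb : b ≤ N) {x : α} (hx : x ∈ M) : chain T 0 b x = x :=
  chain_apply_eq_of_forall_fixed le_rfl (Nat.zero_le b) fun i hi hib =>
    hfix i ⟨hi, hib.trans hb⟩ x (Or.inl hx) fun h => hdisj i ⟨hi, hib.trans hb⟩ (h ▸ hx)

include hinj hfix in
theorem chain_apply_eq_chain_apply_self {k b : ℕ} (hk : k ∈ Icc 1 N) (hkb : k ≤ b)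
    (hb : b ≤ N) : chain T 0 b (c k) = chain T 0 k (c k) :=
  chain_apply_eq_of_forall_fixed (Nat.zero_le k) hkb fun i hki hib =>
    hfix i ⟨by omega, hib.trans hb⟩ (c k) (Or.inr ⟨k, ⟨hk.1, hki.le⟩, rfl⟩) fun h =>
      hki.ne (hinj hk ⟨by omega, hib.trans hb⟩ h)

include hinj hdisj hfix hstep in
theorem chain_mem_and_apply_eq {β : Type*} (G : α → β)
    (hG : ∀ i ∈ Icc 1 N, G (T i (c i)) = G (c i)) :
    ∀ x ∈ M ∪ c '' Icc 1 N, chain T 0 N x ∈ M ∧ G (chain T 0 N x) = G x := by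
  rintro x (hx | ⟨k, hk, rfl⟩)
  · rw [chain_apply_of_mem hdisj hfix le_rfl hx]
    exact ⟨hx, rfl⟩
  induction k using Nat.strong_induction_on with
  | _ k ih =>
  obtain ⟨hk1, hkN⟩ := hk
  obtain ⟨j, rfl⟩ : ∃ j, k = j + 1 := ⟨k - 1, by omega⟩
  have hφ : chain T 0 N (c (j + 1)) = chain T 0 j (T (j + 1) (c (j + 1))) := by
    rw [chain_apply_eq_chain_apply_self hinj hfix ⟨hk1, hkN⟩ hkN le_rfl,
      chain_succ (Nat.zero_le j)]
    rfl
  rw [hφ, ← hG _ ⟨hk1, hkN⟩]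
  rcases hstep _ ⟨hk1, hkN⟩ with hM | ⟨i, hi, hci⟩
  · rw [chain_apply_of_mem hdisj hfix (by omega) hM]
    exact ⟨hM, rfl⟩
  · obtain ⟨hi1, hij⟩ := hi
    have hi' : i ∈ Icc 1 N := ⟨hi1, by omega⟩
    rw [← hci, chain_apply_eq_chain_apply_self hinj hfix hi' (by omega) (by omega),
      ← chain_apply_eq_chain_apply_self hinj hfix hi' hi'.2 le_rfl]
    exact ih i hij hi'

end Chain

namespace BD

variable {Γ : Type*} [TopologicalSpace Γ] [DiscreteTopology Γ] (B : BD Γ)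

theorem one_le_s (n : ℕ) : 1 ≤ B.s n :=
  one_le_pow₀ (by exact_mod_cast B.one_le_lam)

theorem s_nonneg (n : ℕ) : 0 ≤ B.s n := zero_le_one.trans (B.one_le_s n)

theorem s_mono : Monotone B.s := fun _ _ h =>
  pow_le_pow_right₀ (by exact_mod_cast B.one_le_lam) h

theorem s_succ (n : ℕ) : B.s (n + 1) = B.lam * B.s n := pow_succ' _ _

theorem s_eq_natCast (n : ℕ) : B.s n = ((B.lam ^ n : ℕ) : ℝ) := by
  rw [s, Nat.cast_pow]

theorem abs_apply_le_s_of_mem_M {m n : ℕ} (hmn : m ≤ n) {x : Linf Γ} (hx : x ∈ B.M m)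
    {γ : Γ} (hγ : γ ∈ B.Γs n) : |x γ| ≤ B.s n := by
  induction m generalizing x with
  | zero => simp [M] at hx
  | succ m ih =>
    rcases hx with hx | ⟨_, ⟨⟨y, ⟨-, hy⟩, rfl⟩, -⟩, rfl⟩
    · exact ih (by omega) hx
    have hqy : ‖quant y‖ ≤ B.s (m + 1) := (norm_quant_le y).trans hy
    refine (abs_ent_le _).trans ?_
    rcases hmn.eq_or_lt with rfl | hlt
    · rw [B.extension _ (by omega) _ γ hγ]
      exact (abs_apply_le_norm _ γ).trans hqy
    calc |B.i (m + 1) (quant y) γ| ≤ ‖B.i (m + 1)‖ * ‖quant y‖ :=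
          (abs_apply_le_norm _ γ).trans ((B.i (m + 1)).le_opNorm _)
      _ ≤ B.lam * B.s (m + 1) :=
          mul_le_mul (B.norm_i_le _ (by omega)) hqy (norm_nonneg _) (Nat.cast_nonneg _)
      _ ≤ B.s n := B.s_succ (m + 1) ▸ B.s_mono hlt

theorem trunc_restr_of_mem_M {n : ℕ} {x : Linf Γ} (hx : x ∈ B.M n) :
    trunc (B.s n) (restr (B.Γs n) x) = restr (B.Γs n) x := by
  refine trunc_eq_self fun γ => ?_
  by_cases hγ : γ ∈ B.Γs n
  · rw [restr_apply, indicator_of_mem hγ]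
    exact B.abs_apply_le_s_of_mem_M le_rfl hx hγ
  · rw [restr_apply, indicator_of_notMem hγ, abs_zero]
    exact B.s_nonneg n

theorem norm_restr_le_s_of_mem_M {n : ℕ} {x : Linf Γ} (hx : x ∈ B.M n) :
    ‖restr (B.Γs n) x‖ ≤ B.s n :=
  B.trunc_restr_of_mem_M hx ▸ norm_trunc_le (B.s_nonneg n) _

/-- On `Γ_n` the map defining `C_n` is the identity on quantized vectors: `i_n` and `i_{n+1}`
extend, the truncation is inactive and `f` is idempotent. -/
theorem restr_quant_i_succ {n : ℕ} (hn : 1 ≤ n) {t : ℝ} {y : Linf Γ}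
    (hy : y ∈ suppBall (B.Γs n) t) :
    restr (B.Γs n)
      (quant (B.i (n + 1) (quant (trunc t (restr (B.Γs (n + 1)) (B.i n (quant y)))))))
      = quant y := by
  ext γ
  by_cases hγ : γ ∈ B.Γs n
  · have hγ' : γ ∈ B.Γs (n + 1) := (B.ssubset n hn).subset hγ
    have ht : |quant y γ| ≤ t := (abs_ent_le _).trans ((abs_apply_le_norm y γ).trans hy.2)
    rw [restr_apply, indicator_of_mem hγ, quant_apply, B.extension (n + 1) (by omega) _ γ hγ',
      quant_apply, trunc_apply, restr_apply, indicator_of_mem hγ', B.extension n hn _ γ hγ,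
      truncFun_of_abs_le ht, quant_apply, ent_ent, ent_ent]
  · rw [restr_apply, indicator_of_notMem hγ, quant_apply, hy.1 γ hγ, ent_zero]

theorem s_add_one_le_norm_restr_of_mem_C {n : ℕ} (hn : 1 ≤ n) {x : Linf Γ} (hx : x ∈ B.C n) :
    B.s n + 1 ≤ ‖restr (B.Γs n) x‖ := by
  obtain ⟨_, ⟨⟨y, hy, rfl⟩, hnot⟩, rfl⟩ := hx
  rw [B.restr_quant_i_succ hn hy, s_eq_natCast]
  exact add_one_le_norm_quant hy.1 (by rwa [← s_eq_natCast])

theorem notMem_M_of_mem_C {n : ℕ} (hn : 1 ≤ n) {x : Linf Γ} (hx : x ∈ B.C n) : x ∉ B.M n :=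
  fun hM => by
    linarith [B.s_add_one_le_norm_restr_of_mem_C hn hx, B.norm_restr_le_s_of_mem_M hM]

end BD

/-- Proposition (Step 4): `φ_{n,0} = T_{n,1} ∘ ⋯ ∘ T_{n,c(n)}` equals the restriction
to `D_n` of `φ_n = (r_n|_{M_n})⁻¹ ∘ T_{s_n} ∘ r_n` (encoded by membership in `M_n`
together with the defining identity for `r_n ∘ φ_n`). -/
theorem phi_n_zero_eq (B : BD Γ) (n : ℕ) (hn : 1 ≤ n)
    (N : ℕ) (c : ℕ → Linf Γ)
    (hc_inj : Set.InjOn c (Set.Icc 1 N))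
    (hc_range : c '' Set.Icc 1 N = B.C n)
    (hc_mono : ∀ i j, 1 ≤ i → i ≤ j → j ≤ N →
      ‖restr (B.Γs n) (c i)‖ ≤ ‖restr (B.Γs n) (c j)‖)
    (T : ℕ → Linf Γ → Linf Γ)
    (hT_val : ∀ i, 1 ≤ i → i ≤ N → T i (c i) ∈ B.D n ∧
      restr (B.Γs n) (T i (c i)) =
        trunc (‖restr (B.Γs n) (c i)‖ - 1) (restr (B.Γs n) (c i)))
    (hT_id : ∀ i, 1 ≤ i → i ≤ N →
      ∀ z ∈ B.M n ∪ c '' Set.Icc 1 i, z ≠ c i → T i z = z)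
    : ∀ x ∈ B.D n,
      chain T 0 N x ∈ B.M n ∧
      restr (B.Γs n) (chain T 0 N x) = trunc (B.s n) (restr (B.Γs n) x) := by
  have hcC : ∀ i ∈ Icc 1 N, c i ∈ B.C n := fun i hi => hc_range ▸ mem_image_of_mem c hi
  have hlevel : ∀ i ∈ Icc 1 N, B.s n ≤ ‖restr (B.Γs n) (c i)‖ - 1 := fun i hi => by
    linarith [B.s_add_one_le_norm_restr_of_mem_C hn (hcC i hi)]
  have hstep : ∀ i ∈ Icc 1 N, T i (c i) ∈ B.M n ∪ c '' Ico 1 i := by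
    intro i hi
    rcases (hT_val i hi.1 hi.2).1 with hM | hC
    · exact Or.inl hM
    obtain ⟨k, hk, hck⟩ := hc_range ▸ hC
    have hshorter : ‖restr (B.Γs n) (c k)‖ < ‖restr (B.Γs n) (c i)‖ := by
      rw [hck, (hT_val i hi.1 hi.2).2]
      linarith [norm_trunc_le ((B.s_nonneg n).trans (hlevel i hi)) (restr (B.Γs n) (c i))]
    refine Or.inr ⟨k, ⟨hk.1, ?_⟩, hck⟩
    by_contra! hik
    exact hshorter.not_ge (hc_mono i k hi.1 hik hk.2)
  have key := chain_mem_and_apply_eq hc_inj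
    (fun i hi => B.notMem_M_of_mem_C hn (hcC i hi)) (fun i hi => hT_id i hi.1 hi.2) hstep
    (fun x => trunc (B.s n) (restr (B.Γs n) x)) fun i hi => by
      simp only [(hT_val i hi.1 hi.2).2, trunc_trunc (B.s_nonneg n) (hlevel i hi)]
  intro x hx
  obtain ⟨hφM, hφ⟩ := key x (hc_range ▸ hx)
  exact ⟨hφM, (B.trunc_restr_of_mem_M hφM).symm.trans hφ⟩
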